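/- arXiv:2311.07503 — 2 statements merged into one kernel-verified Lean document; each statement's English description precedes it below -/
import Mathlib

section
/- In the path algebra of the quiver with vertices [1],...,[m-1] and edges L_i: [i]→[i-1], R_i: [i-1]→[i] (2 ≤ i ≤ m-1), U_1: [1]→[1], U_m: [m-1]→[m-1], modulo the relations L_i L_{i-1} = 0, R_{i-1} R_i = 0 (3 ≤ i ≤ m-1), L_2 U_1 = U_1 R_2 = R_{m-1} U_m = U_m L_{m-1} = 0, the elements U_i := R_i L_i + L_i R_i for 2 ≤ i ≤ m-1 are central in the algebra. -/
/-- Generators for the path algebra of the quiver of `C(m,1)`: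
idempotents `I x` (constant paths at vertices `[x]`, `1 ≤ x ≤ m-1`),
arrows `L i : [i] → [i-1]`, `R i : [i-1] → [i]` (`2 ≤ i ≤ m-1`),
and loops `U1` at `[1]`, `Um` at `[m-1]`. -/
inductive Gen : Type
  | I : ℕ → Gen
  | L : ℕ → Gen
  | R : ℕ → Gen
  | U1 : Gen
  | Um : Gen

/-- The free `𝔽₂`-algebra on the generators. -/
abbrev FA : Type := FreeAlgebra (ZMod 2) Gen

/-- Inclusion of a generator in the free algebra. -/
def g (x : Gen) : FA := FreeAlgebra.ι (ZMod 2) x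

open Gen in
/-- The defining relations of `C(m,1)`: the path-algebra relations
(orthogonal idempotents summing to `1`, source/target relations for arrows,
out-of-range generators vanish) together with the quotient relations
`L_i L_{i-1} = 0`, `R_{i-1} R_i = 0`, `L_2 U_1 = U_1 R_2 = R_{m-1} U_m = U_m L_{m-1} = 0`. -/
inductive CRel (m : ℕ) : FA → FA → Prop
  | I_oob : ∀ x : ℕ, ¬(1 ≤ x ∧ x ≤ m - 1) → CRel m (g (I x)) 0
  | L_oob : ∀ i : ℕ, ¬(2 ≤ i ∧ i ≤ m - 1) → CRel m (g (L i)) 0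
  | R_oob : ∀ i : ℕ, ¬(2 ≤ i ∧ i ≤ m - 1) → CRel m (g (R i)) 0
  | I_idem : ∀ x : ℕ, CRel m (g (I x) * g (I x)) (g (I x))
  | I_orth : ∀ x y : ℕ, x ≠ y → CRel m (g (I x) * g (I y)) 0
  | unit : CRel m (∑ x ∈ Finset.Icc 1 (m - 1), g (I x)) 1
  | L_src : ∀ i : ℕ, CRel m (g (I i) * g (L i)) (g (L i))
  | L_tgt : ∀ i : ℕ, CRel m (g (L i) * g (I (i - 1))) (g (L i))
  | R_src : ∀ i : ℕ, CRel m (g (I (i - 1)) * g (R i)) (g (R i))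
  | R_tgt : ∀ i : ℕ, CRel m (g (R i) * g (I i)) (g (R i))
  | U1_src : CRel m (g (I 1) * g U1) (g U1)
  | U1_tgt : CRel m (g U1 * g (I 1)) (g U1)
  | Um_src : CRel m (g (I (m - 1)) * g Um) (g Um)
  | Um_tgt : CRel m (g Um * g (I (m - 1))) (g Um)
  | LL : ∀ i : ℕ, 3 ≤ i → i ≤ m - 1 → CRel m (g (L i) * g (L (i - 1))) 0
  | RR : ∀ i : ℕ, 3 ≤ i → i ≤ m - 1 → CRel m (g (R (i - 1)) * g (R i)) 0
  | LU : CRel m (g (L 2) * g U1) 0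
  | UR : CRel m (g U1 * g (R 2)) 0
  | RU : CRel m (g (R (m - 1)) * g Um) 0
  | UL : CRel m (g Um * g (L (m - 1))) 0

/-- The bordered knot algebra `C(m,1)` over `𝔽₂`. -/
abbrev C (m : ℕ) : Type := RingQuot (CRel m)

/-- The image of a generator in `C(m,1)`. -/
def gi (m : ℕ) (x : Gen) : C m := RingQuot.mkRingHom (CRel m) (g x)

/-- The element `U_i := R_i L_i + L_i R_i ∈ C(m,1)` for `2 ≤ i ≤ m-1`. -/
def Uel (m : ℕ) (i : ℕ) : C m :=
  gi m (Gen.R i) * gi m (Gen.L i) + gi m (Gen.L i) * gi m (Gen.R i)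

namespace CAux
open Gen

variable {m : ℕ}

lemma mk0 {a : FA} (h : CRel m a 0) : RingQuot.mkRingHom (CRel m) a = 0 := by
  rw [RingQuot.mkRingHom_rel h, map_zero]

lemma gig (x : Gen) : gi m x = RingQuot.mkRingHom (CRel m) (g x) := rfl

lemma mul0 {x y : Gen} (h : CRel m (g x * g y) 0) : gi m x * gi m y = 0 := by
  rw [gig, gig, ← map_mul, mk0 h]

lemma muleq {x y z : Gen} (h : CRel m (g x * g y) (g z)) : gi m x * gi m y = gi m z := by
  rw [gig, gig, gig, ← map_mul, RingQuot.mkRingHom_rel h]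

lemma ee (x y : ℕ) (h : x ≠ y) : gi m (I x) * gi m (I y) = 0 := mul0 (CRel.I_orth x y h)
lemma eidem (x : ℕ) : gi m (I x) * gi m (I x) = gi m (I x) := muleq (CRel.I_idem x)
lemma lsrc (i : ℕ) : gi m (I i) * gi m (L i) = gi m (L i) := muleq (CRel.L_src i)
lemma ltgt (i : ℕ) : gi m (L i) * gi m (I (i - 1)) = gi m (L i) := muleq (CRel.L_tgt i)
lemma rsrc (i : ℕ) : gi m (I (i - 1)) * gi m (R i) = gi m (R i) := muleq (CRel.R_src i)
lemma rtgt (i : ℕ) : gi m (R i) * gi m (I i) = gi m (R i) := muleq (CRel.R_tgt i)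
lemma u1src : gi m (I 1) * gi m U1 = gi m U1 := muleq CRel.U1_src
lemma u1tgt : gi m U1 * gi m (I 1) = gi m U1 := muleq CRel.U1_tgt
lemma umsrc : gi m (I (m - 1)) * gi m Um = gi m Um := muleq CRel.Um_src
lemma umtgt : gi m Um * gi m (I (m - 1)) = gi m Um := muleq CRel.Um_tgt

/-- Composition across mismatched idempotents vanishes. -/
lemma cz {a b : C m} {s t : ℕ} (ha : a * gi m (I s) = a) (hb : gi m (I t) * b = b)
    (h : s ≠ t) : a * b = 0 := by
  rw [← ha, ← hb, mul_assoc, ← mul_assoc (gi m (I s)), ee s t h, zero_mul, mul_zero]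

lemma ll (i j : ℕ) (h : i - 1 ≠ j) : gi m (L i) * gi m (L j) = 0 := cz (ltgt i) (lsrc j) h
lemma lr (i j : ℕ) (h : i - 1 ≠ j - 1) : gi m (L i) * gi m (R j) = 0 := cz (ltgt i) (rsrc j) h
lemma rl (i j : ℕ) (h : i ≠ j) : gi m (R i) * gi m (L j) = 0 := cz (rtgt i) (lsrc j) h
lemma rr (i j : ℕ) (h : i ≠ j - 1) : gi m (R i) * gi m (R j) = 0 := cz (rtgt i) (rsrc j) h
lemma le' (i j : ℕ) (h : i - 1 ≠ j) : gi m (L i) * gi m (I j) = 0 := cz (ltgt i) (eidem j) h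
lemma el (j i : ℕ) (h : j ≠ i) : gi m (I j) * gi m (L i) = 0 := cz (eidem j) (lsrc i) h
lemma re (i j : ℕ) (h : i ≠ j) : gi m (R i) * gi m (I j) = 0 := cz (rtgt i) (eidem j) h
lemma er (j i : ℕ) (h : j ≠ i - 1) : gi m (I j) * gi m (R i) = 0 := cz (eidem j) (rsrc i) h
lemma lu1 (i : ℕ) (h : i - 1 ≠ 1) : gi m (L i) * gi m U1 = 0 := cz (ltgt i) u1src h
lemma u1l (i : ℕ) (h : (1 : ℕ) ≠ i) : gi m U1 * gi m (L i) = 0 := cz u1tgt (lsrc i) h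
lemma ru1 (i : ℕ) (h : i ≠ 1) : gi m (R i) * gi m U1 = 0 := cz (rtgt i) u1src h
lemma u1r (i : ℕ) (h : (1 : ℕ) ≠ i - 1) : gi m U1 * gi m (R i) = 0 := cz u1tgt (rsrc i) h
lemma lum (i : ℕ) (h : i - 1 ≠ m - 1) : gi m (L i) * gi m Um = 0 := cz (ltgt i) umsrc h
lemma uml (i : ℕ) (h : m - 1 ≠ i) : gi m Um * gi m (L i) = 0 := cz umtgt (lsrc i) h
lemma rum (i : ℕ) (h : i ≠ m - 1) : gi m (R i) * gi m Um = 0 := cz (rtgt i) umsrc h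
lemma umr (i : ℕ) (h : m - 1 ≠ i - 1) : gi m Um * gi m (R i) = 0 := cz umtgt (rsrc i) h

lemma l_oob (i : ℕ) (h : ¬(2 ≤ i ∧ i ≤ m - 1)) : gi m (L i) = 0 := by
  rw [gig, mk0 (CRel.L_oob i h)]
lemma r_oob (i : ℕ) (h : ¬(2 ≤ i ∧ i ≤ m - 1)) : gi m (R i) = 0 := by
  rw [gig, mk0 (CRel.R_oob i h)]

lemma expandl (i : ℕ) (b : C m) :
    Uel m i * b = gi m (R i) * (gi m (L i) * b) + gi m (L i) * (gi m (R i) * b) := by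
  simp only [Uel, add_mul, mul_assoc]

lemma expandr (i : ℕ) (b : C m) :
    b * Uel m i = (b * gi m (R i)) * gi m (L i) + (b * gi m (L i)) * gi m (R i) := by
  simp only [Uel, mul_add, mul_assoc]

lemma comm_I (i j : ℕ) (h2 : 2 ≤ i) :
    Uel m i * gi m (I j) = gi m (I j) * Uel m i := by
  rw [expandl, expandr]
  by_cases h1 : j = i - 1
  · subst h1
    simp [ltgt, rsrc, re i (i - 1) (by omega), el (i - 1) i (by omega)]
  · by_cases h3 : j = i
    · subst h3
      simp [rtgt, lsrc, le' j j (by omega), er j j (by omega)]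
    · simp [le' i j (by omega), re i j (by omega), el j i (by omega), er j i (by omega)]

lemma comm_L (i j : ℕ) (h2 : 2 ≤ i) (hi : i ≤ m - 1) :
    Uel m i * gi m (L j) = gi m (L j) * Uel m i := by
  by_cases hj : 2 ≤ j ∧ j ≤ m - 1
  · rw [expandl, expandr]
    by_cases h1 : j = i
    · subst h1
      simp [ll j j (by omega), mul_assoc]
    · by_cases h3 : j = i - 1
      · subst h3
        simp [mul0 (CRel.LL i (by omega) hi), rl i (i - 1) (by omega),
          lr (i - 1) i (by omega), ll (i - 1) i (by omega)]
      · by_cases h4 : j = i + 1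
        · subst h4
          have h5 : gi m (L (i + 1)) * gi m (L i) = 0 := by
            have := mul0 (m := m) (CRel.LL (i + 1) (by omega) (by omega))
            simpa using this
          simp [ll i (i + 1) (by omega), rl i (i + 1) (by omega),
            lr (i + 1) i (by omega), h5]
        · simp [ll i j (by omega), rl i j (by omega), lr j i (by omega), ll j i (by omega)]
  · rw [l_oob j hj, mul_zero, zero_mul]

lemma comm_R (i j : ℕ) (h2 : 2 ≤ i) (hi : i ≤ m - 1) :
    Uel m i * gi m (R j) = gi m (R j) * Uel m i := by
  by_cases hj : 2 ≤ j ∧ j ≤ m - 1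
  · rw [expandl, expandr]
    by_cases h1 : j = i
    · subst h1
      simp [rr j j (by omega), mul_assoc]
    · by_cases h3 : j = i + 1
      · subst h3
        have h5 : gi m (R i) * gi m (R (i + 1)) = 0 := by
          have := mul0 (m := m) (CRel.RR (i + 1) (by omega) (by omega))
          simpa using this
        simp [h5, lr i (i + 1) (by omega), rr (i + 1) i (by omega), rl (i + 1) i (by omega)]
      · by_cases h4 : j = i - 1
        · subst h4
          simp [rr i (i - 1) (by omega), lr i (i - 1) (by omega),
            mul0 (CRel.RR i (by omega) hi), rl (i - 1) i (by omega)]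
        · simp [rr i j (by omega), lr i j (by omega), rr j i (by omega), rl j i (by omega)]
  · rw [r_oob j hj, mul_zero, zero_mul]

lemma comm_U1 (i : ℕ) (h2 : 2 ≤ i) :
    Uel m i * gi m U1 = gi m U1 * Uel m i := by
  rw [expandl, expandr]
  by_cases h1 : i = 2
  · subst h1
    simp [mul0 (m := m) CRel.LU, ru1 2 (by omega), mul0 (m := m) CRel.UR, u1l 2 (by omega)]
  · simp [lu1 i (by omega), ru1 i (by omega), u1r i (by omega), u1l i (by omega)]

lemma comm_Um (i : ℕ) (hm : 2 < m) (h2 : 2 ≤ i) (hi : i ≤ m - 1) :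
    Uel m i * gi m Um = gi m Um * Uel m i := by
  rw [expandl, expandr]
  by_cases h1 : i = m - 1
  · subst h1
    simp [lum (m := m) (m - 1) (by omega), mul0 (m := m) CRel.RU,
      umr (m := m) (m - 1) (by omega), mul0 (m := m) CRel.UL]
  · simp [lum (m := m) i (by omega), rum (m := m) i (by omega),
      umr (m := m) i (by omega), uml (m := m) i (by omega)]

lemma comm_gen (i : ℕ) (hm : 2 < m) (h2 : 2 ≤ i) (hi : i ≤ m - 1) (x : Gen) :
    Uel m i * gi m x = gi m x * Uel m i := by
  cases x with
  | I j => exact comm_I i j h2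
  | L j => exact comm_L i j h2 hi
  | R j => exact comm_R i j h2 hi
  | U1 => exact comm_U1 i h2
  | Um => exact comm_Um i hm h2 hi

end CAux

/-- In `C(m,1)` (`m > 2`), the elements
`U_i = R_i L_i + L_i R_i` for `2 ≤ i ≤ m-1` are central. -/
theorem Uel_central (m : ℕ) (hm : 2 < m) (i : ℕ) (h2 : 2 ≤ i) (hi : i ≤ m - 1)
    (a : C m) : Uel m i * a = a * Uel m i := by
  obtain ⟨a, rfl⟩ := RingQuot.mkRingHom_surjective (CRel m) a
  induction a using FreeAlgebra.induction with
  | grade0 r =>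
      have h : (RingQuot.mkRingHom (CRel m)) (algebraMap (ZMod 2) FA r)
          = algebraMap (ZMod 2) (C m) r := by
        rw [← RingQuot.mkAlgHom_coe (ZMod 2) (CRel m)]
        exact (RingQuot.mkAlgHom (ZMod 2) (CRel m)).commutes r
      rw [h, Algebra.commutes]
  | grade1 x => exact CAux.comm_gen i hm h2 hi x
  | mul a b ha hb =>
      rw [map_mul, ← mul_assoc, ha, mul_assoc, hb, mul_assoc]
  | add a b ha hb =>
      rw [map_add, mul_add, add_mul, ha, hb]
end

section
/- In the algebra C(m,1) over F_2, for each i with 2 ≤ i ≤ m-1 and each j ≠ i with 2 ≤ j ≤ m-1, the elements U_i = R_i L_i + L_i R_i and U_j = R_j L_j + L_j R_j satisfy U_i U_j = U_j U_i. -/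
section Aux

variable (m : ℕ)

lemma gi_I_orth (x y : ℕ) (h : x ≠ y) : gi m (Gen.I x) * gi m (Gen.I y) = 0 := by
  simpa [gi, map_mul] using RingQuot.mkRingHom_rel (CRel.I_orth (m := m) x y h)

lemma gi_L_src (i : ℕ) : gi m (Gen.I i) * gi m (Gen.L i) = gi m (Gen.L i) := by
  simpa [gi, map_mul] using RingQuot.mkRingHom_rel (CRel.L_src (m := m) i)

lemma gi_L_tgt (i : ℕ) : gi m (Gen.L i) * gi m (Gen.I (i - 1)) = gi m (Gen.L i) := by
  simpa [gi, map_mul] using RingQuot.mkRingHom_rel (CRel.L_tgt (m := m) i)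

lemma gi_R_src (i : ℕ) : gi m (Gen.I (i - 1)) * gi m (Gen.R i) = gi m (Gen.R i) := by
  simpa [gi, map_mul] using RingQuot.mkRingHom_rel (CRel.R_src (m := m) i)

lemma gi_R_tgt (i : ℕ) : gi m (Gen.R i) * gi m (Gen.I i) = gi m (Gen.R i) := by
  simpa [gi, map_mul] using RingQuot.mkRingHom_rel (CRel.R_tgt (m := m) i)

lemma gi_LL (i : ℕ) (h3 : 3 ≤ i) (h : i ≤ m - 1) :
    gi m (Gen.L i) * gi m (Gen.L (i - 1)) = 0 := by
  simpa [gi, map_mul] using RingQuot.mkRingHom_rel (CRel.LL (m := m) i h3 h)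

lemma gi_RR (i : ℕ) (h3 : 3 ≤ i) (h : i ≤ m - 1) :
    gi m (Gen.R (i - 1)) * gi m (Gen.R i) = 0 := by
  simpa [gi, map_mul] using RingQuot.mkRingHom_rel (CRel.RR (m := m) i h3 h)

/-- Sandwich lemma: if `a` ends at `p`, `b` starts at `q`, and `p * q = 0`, then `a * b = 0`. -/
lemma sandwich {R : Type*} [Ring R] (a b p q : R)
    (hp : a * p = a) (hq : q * b = b) (hpq : p * q = 0) : a * b = 0 := by
  rw [← hp, ← hq, mul_assoc, ← mul_assoc p, hpq, zero_mul, mul_zero]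

lemma Uel_mul_zero (i j : ℕ)
    (h2i : 2 ≤ i) (hi : i ≤ m - 1) (h2j : 2 ≤ j) (hj : j ≤ m - 1) (hij : j ≠ i) :
    Uel m i * Uel m j = 0 := by
  set Li := gi m (Gen.L i)
  set Ri := gi m (Gen.R i)
  set Lj := gi m (Gen.L j)
  set Rj := gi m (Gen.R j)
  have t1 : (Ri * Li) * (Rj * Lj) = 0 := by
    refine sandwich _ _ (gi m (Gen.I (i - 1))) (gi m (Gen.I (j - 1))) ?_ ?_
      (gi_I_orth m _ _ (by omega))
    · rw [mul_assoc, gi_L_tgt]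
    · rw [← mul_assoc, gi_R_src]
  have t4 : (Li * Ri) * (Lj * Rj) = 0 := by
    refine sandwich _ _ (gi m (Gen.I i)) (gi m (Gen.I j)) ?_ ?_
      (gi_I_orth m _ _ (by omega))
    · rw [mul_assoc, gi_R_tgt]
    · rw [← mul_assoc, gi_L_src]
  have t2 : (Ri * Li) * (Lj * Rj) = 0 := by
    by_cases hji : j = i - 1
    · subst hji
      have h0 : Li * Lj = 0 := gi_LL m i (by omega) hi
      rw [mul_assoc, ← mul_assoc Li, h0, zero_mul, mul_zero]
    · refine sandwich _ _ (gi m (Gen.I (i - 1))) (gi m (Gen.I j)) ?_ ?_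
        (gi_I_orth m _ _ (by omega))
      · rw [mul_assoc, gi_L_tgt]
      · rw [← mul_assoc, gi_L_src]
  have t3 : (Li * Ri) * (Rj * Lj) = 0 := by
    by_cases hji : j = i + 1
    · subst hji
      have h0 : Ri * Rj = 0 := by
        have := gi_RR m (i + 1) (by omega) hj
        simpa using this
      rw [mul_assoc, ← mul_assoc Ri, h0, zero_mul, mul_zero]
    · refine sandwich _ _ (gi m (Gen.I i)) (gi m (Gen.I (j - 1))) ?_ ?_
        (gi_I_orth m _ _ (by omega))
      · rw [mul_assoc, gi_R_tgt]
      · rw [← mul_assoc, gi_R_src]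
  show (Ri * Li + Li * Ri) * (Rj * Lj + Lj * Rj) = 0
  rw [add_mul, mul_add, mul_add, t1, t2, t3, t4]
  simp

end Aux

/-- In `C(m,1)` over `𝔽₂`, for `2 ≤ i, j ≤ m-1` with `i ≠ j`,
the elements `U_i = R_i L_i + L_i R_i` and `U_j = R_j L_j + L_j R_j` commute. -/
theorem Uel_mul_comm (m : ℕ) (hm : 2 < m) (i j : ℕ)
    (h2i : 2 ≤ i) (hi : i ≤ m - 1) (h2j : 2 ≤ j) (hj : j ≤ m - 1) (hij : j ≠ i) :
    Uel m i * Uel m j = Uel m j * Uel m i := by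
  rw [Uel_mul_zero m i j h2i hi h2j hj hij,
    Uel_mul_zero m j i h2j hj h2i hi (Ne.symm hij)]
end
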